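/- arXiv:2406.00624 — 2 statements merged into one kernel-verified Lean document; each statement's English description precedes it below -/
import Mathlib

section
/- Let q ≥ 2 and r ≥ 1 be integers and fix an integer j with 0 ≤ j ≤ r. For 0 ≤ i ≤ r define Q_i := (-1)^i · Σ_{k=0}^{i} (-q)^{(i-k)(i+j-k) + k(k-1)/2} · [r-j choose i-k]_{q²} · [j choose k]_{-q}, and set Q_{-1} = Q_{r+1} = 0. Then for all 0 ≤ i ≤ r: l_{2r,q}^j · Q_i = ((q^{2i+2}-1)/(q²-1))·Q_{i+1} + ((q^{2i}-1)(q-1)/(q²-1))·Q_i + (q^{2i-1}(q^{2(r-i+1)}-1)/(q²-1))·Q_{i-1}. In particular Q_1 = l_{2r,q}^j·Q_0 with Q_0 = 1. -/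
/-- The quantity `l_{N,q}^j = (-(-q)^(N+1-j) - (-q)^j - q + 1)/(q^2-1)` as a rational number,
integer exponents being interpreted via `zpow`. -/
def lvalz (N : ℕ) (q : ℤ) (m : ℤ) : ℚ :=
  (-(-(q : ℚ)) ^ ((N : ℤ) + 1 - m) - (-(q : ℚ)) ^ m - (q : ℚ) + 1) / ((q : ℚ) ^ 2 - 1)

/-- The Gaussian (`t`-)binomial coefficient `[a choose b]_t`, defined by the `q`-Pascal rule
`[a+1 choose b+1]_t = [a choose b]_t + t^(b+1)·[a choose b+1]_t`; it vanishes for `b > a`. -/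
def qbinom (t : ℚ) : ℕ → ℕ → ℚ
  | _, 0 => 1
  | 0, _ + 1 => 0
  | a + 1, b + 1 => qbinom t a b + t ^ (b + 1) * qbinom t a (b + 1)

/-- The value `Q_i` (for `0 ≤ i ≤ r`, extended by `0` outside this range) of the eigenfunction
of the Hecke operator `Q_Y` on the Siegel-parahoric Hecke module:
`Q_i = (-1)^i · Σ_{k=0}^{i} (-q)^{(i-k)(i+j-k)+k(k-1)/2} [r-j choose i-k]_{q²} [j choose k]_{-q}`. -/
def QQ (q : ℤ) (r j : ℕ) (n : ℤ) : ℚ :=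
  if 0 ≤ n ∧ n ≤ (r : ℤ) then
    (-1 : ℚ) ^ n.toNat *
      ∑ k ∈ Finset.range (n.toNat + 1),
        (-(q : ℚ)) ^ ((n.toNat - k) * (n.toNat + j - k) + k * (k - 1) / 2) *
          qbinom ((q : ℚ) ^ 2) (r - j) (n.toNat - k) * qbinom (-(q : ℚ)) j k
  else 0

lemma qbinom_zero (t : ℚ) (a : ℕ) : qbinom t a 0 = 1 := by cases a <;> rfl

lemma qbinom_of_lt (t : ℚ) : ∀ {a b : ℕ}, a < b → qbinom t a b = 0 := by
  intro a
  induction a with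
  | zero => intro b hb; match b, hb with
            | b + 1, _ => rfl
  | succ n ih =>
      intro b hb
      match b, hb with
      | b + 1, hb =>
        show qbinom t n b + t ^ (b+1) * qbinom t n (b+1) = 0
        rw [ih (by omega), ih (by omega)]
        ring

def Bz (t : ℚ) (n : ℕ) (m : ℤ) : ℚ := if 0 ≤ m then qbinom t n m.toNat else 0

lemma Bz_of_neg (t : ℚ) (n : ℕ) {m : ℤ} (h : m < 0) : Bz t n m = 0 := by
  simp [Bz, not_le.mpr h]

lemma Bz_of_gt (t : ℚ) (n : ℕ) {m : ℤ} (h : (n : ℤ) < m) : Bz t n m = 0 := by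
  have h0 : 0 ≤ m := le_trans (Int.natCast_nonneg n) h.le
  rw [Bz, if_pos h0, qbinom_of_lt]
  omega

lemma Bz_natCast (t : ℚ) (n : ℕ) (m : ℕ) : Bz t n (m : ℤ) = qbinom t n m := by
  simp [Bz]

-- contiguous relation for nat indices
lemma gcontig (t : ℚ) (ht : t ≠ 0) (n : ℕ) :
    ∀ m : ℕ, (t ^ (m + 1) - 1) * qbinom t n (m + 1)
      = (t ^ ((n : ℤ) - (m : ℤ)) - 1) * qbinom t n m := by
  induction n with
  | zero =>
      intro m
      rw [qbinom_of_lt t (by omega)]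
      cases m with
      | zero => simp [qbinom_zero]
      | succ m => rw [qbinom_of_lt t (by omega)]; ring
  | succ n ih =>
      intro m
      cases m with
      | zero =>
          show (t ^ (0+1) - 1) * qbinom t (n+1) (0+1) = _
          rw [show qbinom t (n+1) (0+1) = qbinom t n 0 + t ^ (0+1) * qbinom t n (0+1) from rfl]
          have h1 := ih 0
          rw [qbinom_zero] at h1
          have hp : t ^ (0+1) * t ^ ((n:ℤ) - ((0:ℕ):ℤ)) = t ^ ((((n+1):ℕ):ℤ) - ((0:ℕ):ℤ)) := by
            rw [← zpow_natCast t (0+1), ← zpow_add₀ ht]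
            congr 1; push_cast; ring
          rw [qbinom_zero, qbinom_zero]
          linear_combination (t^(0+1)) * h1 + hp
      | succ m =>
          rw [show qbinom t (n+1) (m+1+1) = qbinom t n (m+1) + t ^ (m+2) * qbinom t n (m+2) from rfl,
              show qbinom t (n+1) (m+1) = qbinom t n m + t ^ (m+1) * qbinom t n (m+1) from rfl]
          have h1 := ih (m+1)
          have h0 := ih m
          have hp1 : t ^ (m+2) * t ^ ((n:ℤ) - (((m+1):ℕ):ℤ)) = t ^ ((n:ℤ) + 1) := by
            rw [← zpow_natCast t (m+2), ← zpow_add₀ ht]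
            congr 1; push_cast; ring
          have hp2 : t ^ (m+1) * t ^ ((n:ℤ) - ((m:ℕ):ℤ)) = t ^ ((n:ℤ) + 1) := by
            rw [← zpow_natCast t (m+1), ← zpow_add₀ ht]
            congr 1; push_cast; ring
          have hp3 : ((((n+1):ℕ):ℤ) - (((m+1):ℕ):ℤ)) = (n:ℤ) - ((m:ℕ):ℤ) := by push_cast; ring
          rw [hp3]
          linear_combination (t^(m+2)) * h1 + qbinom t n (m+1) * hp1 + h0 - qbinom t n (m+1) * hp2

-- contiguous relation, integer version
lemma Bzcont (t : ℚ) (ht : t ≠ 0) (n : ℕ) (m : ℤ) :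
    (t ^ (m + 1) - 1) * Bz t n (m + 1) = (t ^ ((n : ℤ) - m) - 1) * Bz t n m := by
  rcases le_or_gt 0 m with h | h
  · obtain ⟨mn, rfl⟩ := Int.eq_ofNat_of_zero_le h
    have e1 : ((mn : ℤ) + 1) = ((mn + 1 : ℕ) : ℤ) := by push_cast; ring
    rw [e1, Bz_natCast, Bz_natCast, show t ^ (((mn+1:ℕ)):ℤ) = t ^ (mn+1) from zpow_natCast t (mn+1)]
    exact gcontig t ht n mn
  · rcases eq_or_lt_of_le (by omega : m + 1 ≤ 0) with h1 | h1
    · rw [h1, Bz_of_neg t n h, zpow_zero]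
      ring
    · rw [Bz_of_neg t n h, Bz_of_neg t n h1]
      ring


lemma hs_ne (x : ℚ) (hx : x ≠ 0) : -x ≠ 0 := neg_ne_zero.mpr hx

lemma zsq (x : ℚ) (c : ℤ) : (-x) ^ (2 * c) = x ^ (2 * c) := by
  have h : (-x) ^ (2:ℤ) = x ^ (2:ℤ) := by
    rw [show (2:ℤ) = ((2:ℕ):ℤ) from rfl, zpow_natCast, zpow_natCast, neg_sq]
  rw [zpow_mul, zpow_mul, h]

lemma tpow (x : ℚ) (c : ℤ) : (x ^ 2) ^ c = x ^ (2 * c) := by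
  rw [← zpow_natCast x 2, ← zpow_mul]
  norm_num

lemma hT2 (x : ℚ) (hx : x ≠ 0) (k : ℤ) : x ^ (2 * k) = ((-x) ^ k) ^ 2 := by
  rw [sq, ← zpow_add₀ (hs_ne x hx), show k + k = 2 * k from by ring, zsq]

def Ee (j : ℕ) (i k : ℤ) : ℤ := (i - k) * (i + (j:ℤ) - k) + k * (k - 1) / 2

lemma Ee_i_add (j : ℕ) (i k : ℤ) : Ee j (i+1) k = Ee j i k + (2*(i-k) + (j:ℤ) + 1) := by
  unfold Ee
  generalize k * (k - 1) / 2 = D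
  ring

lemma Ee_i_sub (j : ℕ) (i k : ℤ) : Ee j (i-1) k = Ee j i k - (2*(i-k) + (j:ℤ) - 1) := by
  unfold Ee
  generalize k * (k - 1) / 2 = D
  ring

lemma Ee_k_add (j : ℕ) (i k : ℤ) : Ee j i (k+1) = Ee j i k + (k - 2*(i-k) - (j:ℤ) + 1) := by
  unfold Ee
  rw [show (k+1) * ((k+1) - 1) = k * (k-1) + k * 2 from by ring,
      Int.add_mul_ediv_right _ _ (by norm_num : (2:ℤ) ≠ 0)]
  generalize k * (k - 1) / 2 = D
  ring

lemma Ee_k_sub (j : ℕ) (i k : ℤ) : Ee j i (k-1) = Ee j i k - ((k-1) - 2*(i-k+1) - (j:ℤ) + 1) := by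
  have := Ee_k_add j i (k-1)
  rw [sub_add_cancel] at this
  rw [this]; ring

def cK (x : ℚ) (r j : ℕ) (i k : ℤ) : ℚ :=
  (-x)^(2*(r:ℤ)+1-(j:ℤ)) * (x^(2*k) - 1) + (-x)^((j:ℤ)) * x^(2*(i-k)) * (x^(2*k+1) - 1)
    - (x-1) * x^(2*i)

def uK (x : ℚ) (j : ℕ) (i k : ℤ) : ℚ :=
  (-x)^(2*(i-k)+(j:ℤ)+1) * ((-x)^k + 1) * ((-x)^((j:ℤ)-k+1) - 1)

def vK (x : ℚ) (j : ℕ) (k : ℤ) : ℚ :=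
  -(-x)^(2*k-(j:ℤ)) * ((-x)^((j:ℤ)-k) + 1) * ((-x)^(k+1) - 1)

def muK (x : ℚ) (j : ℕ) (i k : ℤ) : ℚ :=
  (-x)^((j:ℤ)+1) * x^(2*i) * (-x)^(-k) - (-x)^((j:ℤ)) * x^(2*i+1) * (-x)^(-(2*k))

def LL (x : ℚ) (r j : ℕ) : ℚ := -(-x)^(2*(r:ℤ)+1-(j:ℤ)) - (-x)^((j:ℤ)) - x + 1

-- power decomposition helpers
lemma pw1 {x : ℚ} (hx : x ≠ 0) (r j : ℕ) : (-x)^(2*(r:ℤ)+1-(j:ℤ))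
    = x^(2*(r:ℤ)) * (-x) / (-x)^((j:ℤ)) := by
  rw [show 2*(r:ℤ)+1-(j:ℤ) = 2*(r:ℤ) + 1 + (-(j:ℤ)) from by ring,
      zpow_add₀ (hs_ne x hx), zpow_add₀ (hs_ne x hx), zpow_one, zpow_neg, zsq]
  ring

lemma pw2 {x : ℚ} (hx : x ≠ 0) (j : ℕ) (i k : ℤ) : (-x)^(2*(i-k)+(j:ℤ)+1)
    = x^(2*i) / ((-x)^k)^2 * (-x)^((j:ℤ)) * (-x) := by
  rw [show 2*(i-k)+(j:ℤ)+1 = 2*(i-k) + (j:ℤ) + 1 from rfl,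
      zpow_add₀ (hs_ne x hx), zpow_add₀ (hs_ne x hx), zpow_one, zsq,
      show 2*(i-k) = 2*i + (-(2*k)) from by ring, zpow_add₀ hx, zpow_neg, hT2 x hx k]
  ring

lemma pw3 {x : ℚ} (hx : x ≠ 0) (j : ℕ) (i k : ℤ) : (-x)^(2*(i-k)+(j:ℤ)-1)
    = x^(2*i) / ((-x)^k)^2 * (-x)^((j:ℤ)) / (-x) := by
  rw [show 2*(i-k)+(j:ℤ)-1 = 2*(i-k) + (j:ℤ) + (-1) from by ring,
      zpow_add₀ (hs_ne x hx), zpow_add₀ (hs_ne x hx), zsq,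
      show 2*(i-k) = 2*i + (-(2*k)) from by ring, zpow_add₀ hx, zpow_neg, zpow_neg,
      zpow_one, hT2 x hx k]
  ring

lemma pw4 {x : ℚ} (hx : x ≠ 0) (r j : ℕ) (i k : ℤ) : x^(2*((r:ℤ)-(j:ℤ)-(i-k)))
    = x^(2*(r:ℤ)) / ((-x)^((j:ℤ)))^2 / x^(2*i) * ((-x)^k)^2 := by
  rw [show 2*((r:ℤ)-(j:ℤ)-(i-k)) = 2*(r:ℤ) + (-(2*(j:ℤ))) + (-(2*i)) + 2*k from by ring,
      zpow_add₀ hx, zpow_add₀ hx, zpow_add₀ hx, zpow_neg, zpow_neg, hT2 x hx k,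
      show x^(2*(j:ℤ)) = ((-x)^((j:ℤ)))^2 from hT2 x hx (j:ℤ)]
  ring

lemma pw5 {x : ℚ} (hx : x ≠ 0) (i : ℤ) : x^(2*i-1) = x^(2*i) / x := by
  rw [show 2*i-1 = 2*i + (-1) from by ring, zpow_add₀ hx, zpow_neg, zpow_one]
  ring

lemma pw6 {x : ℚ} (hx : x ≠ 0) (j : ℕ) (k : ℤ) : x^(2*((j:ℤ)-k))
    = ((-x)^((j:ℤ)))^2 / ((-x)^k)^2 := by
  rw [show 2*((j:ℤ)-k) = 2*(j:ℤ) + (-(2*k)) from by ring, zpow_add₀ hx, zpow_neg,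
      hT2 x hx k, show x^(2*(j:ℤ)) = ((-x)^((j:ℤ)))^2 from hT2 x hx (j:ℤ)]
  ring

lemma pw7 {x : ℚ} (hx : x ≠ 0) (i k : ℤ) : x^(2*(i-k)) = x^(2*i) / ((-x)^k)^2 := by
  rw [show 2*(i-k) = 2*i + (-(2*k)) from by ring, zpow_add₀ hx, zpow_neg, hT2 x hx k]
  ring

lemma pw8 {x : ℚ} (hx : x ≠ 0) (k : ℤ) : x^(2*k+1) = ((-x)^k)^2 * x := by
  rw [zpow_add₀ hx, zpow_one, hT2 x hx k]

-- the A-coefficient scalar identity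
lemma hcoefA {x : ℚ} (hx : x ≠ 0) (r j : ℕ) (i k : ℤ) :
    (-(-x)^(2*(r:ℤ)+1-(j:ℤ)) - (-x)^((j:ℤ)) - x + 1)
      + (-x)^(2*(i-k)+(j:ℤ)+1) * x^(2*k) * (x^(2*((r:ℤ)-(j:ℤ)-(i-k))) - 1)
      - (x^(2*i) - 1)*(x-1)
      + x^(2*i-1) * ((-x)^(2*(i-k)+(j:ℤ)-1))⁻¹ * x^(2*((j:ℤ)-k)) * (x^(2*(i-k)) - 1)
    = cK x r j i k := by
  have hs := hs_ne x hx
  have hS : (-x)^((j:ℤ)) ≠ 0 := zpow_ne_zero _ hs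
  have hT : (-x)^k ≠ 0 := zpow_ne_zero _ hs
  have hA : x^(2*i) ≠ 0 := zpow_ne_zero _ hx
  have hR : x^(2*(r:ℤ)) ≠ 0 := zpow_ne_zero _ hx
  rw [cK, pw1 hx r j, pw2 hx j i k, pw3 hx j i k, pw4 hx r j i k, pw5 hx i, pw6 hx j k,
      pw7 hx i k, pw8 hx k, hT2 x hx k]
  field_simp
  ring

lemma pwk1 {x : ℚ} (hx : x ≠ 0) (k : ℤ) : (-x)^(k+1) = (-x)^k * (-x) := by
  rw [zpow_add₀ (hs_ne x hx), zpow_one]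

lemma pwjk {x : ℚ} (hx : x ≠ 0) (j : ℕ) (k : ℤ) : (-x)^((j:ℤ)-k) = (-x)^((j:ℤ)) / (-x)^k :=
  zpow_sub₀ (hs_ne x hx) _ _

lemma pwD1 {x : ℚ} (hx : x ≠ 0) (j : ℕ) (i k : ℤ) :
    (-x)^(k - 2*(i-k) - (j:ℤ) + 1) = ((-x)^k)^3 / x^(2*i) / (-x)^((j:ℤ)) * (-x) := by
  have hs := hs_ne x hx
  rw [show k - 2*(i-k) - (j:ℤ) + 1 = k + k + k + (-(2*i)) + (-(j:ℤ)) + 1 from by ring,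
      zpow_add₀ hs, zpow_add₀ hs, zpow_add₀ hs, zpow_add₀ hs, zpow_add₀ hs,
      zpow_one, zpow_neg, zpow_neg, zsq]
  ring

lemma pwD2 {x : ℚ} (hx : x ≠ 0) (j : ℕ) (i k : ℤ) :
    (-x)^((k-1) - 2*(i-k+1) - (j:ℤ) + 1) = ((-x)^k)^3 / x^(2*i) / (-x)^((j:ℤ)) / x^2 := by
  have hs := hs_ne x hx
  rw [show (k-1) - 2*(i-k+1) - (j:ℤ) + 1 = k + k + k + (-(2*i)) + (-(j:ℤ)) + (-(2*1)) from by ring,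
      zpow_add₀ hs, zpow_add₀ hs, zpow_add₀ hs, zpow_add₀ hs, zpow_add₀ hs,
      zpow_neg, zpow_neg, zpow_neg, zsq, zsq,
      show x^(2*(1:ℤ)) = x^2 from by rw [show (2*(1:ℤ)) = ((2:ℕ):ℤ) from by norm_num, zpow_natCast]]
  ring

lemma pwj1 {x : ℚ} (hx : x ≠ 0) (j : ℕ) : (-x)^((j:ℤ)+1) = (-x)^((j:ℤ)) * (-x) := by
  rw [zpow_add₀ (hs_ne x hx), zpow_one]

lemma pwnegk {x : ℚ} (hx : x ≠ 0) (k : ℤ) : (-x)^(-k) = ((-x)^k)⁻¹ := zpow_neg _ _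

lemma pwneg2k {x : ℚ} (hx : x ≠ 0) (k : ℤ) : (-x)^(-(2*k)) = (((-x)^k)^2)⁻¹ := by
  rw [zpow_neg, zsq, hT2 x hx k]

lemma pw2i1 {x : ℚ} (hx : x ≠ 0) (i : ℤ) : x^(2*i+1) = x^(2*i) * x := by
  rw [zpow_add₀ hx, zpow_one]

lemma pwvk {x : ℚ} (hx : x ≠ 0) (j : ℕ) (k : ℤ) :
    (-x)^(2*(k-1)-(j:ℤ)) = ((-x)^k)^2 / x^2 / (-x)^((j:ℤ)) := by
  have hs := hs_ne x hx
  rw [show 2*(k-1)-(j:ℤ) = k + k + (-(2*1)) + (-(j:ℤ)) from by ring,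
      zpow_add₀ hs, zpow_add₀ hs, zpow_add₀ hs, zpow_neg, zpow_neg, zsq,
      show x^(2*(1:ℤ)) = x^2 from by rw [show (2*(1:ℤ)) = ((2:ℕ):ℤ) from by norm_num, zpow_natCast]]
  ring

lemma pwjk1 {x : ℚ} (hx : x ≠ 0) (j : ℕ) (k : ℤ) :
    (-x)^((j:ℤ)-(k-1)) = (-x)^((j:ℤ)) / (-x)^k * (-x) := by
  have hs := hs_ne x hx
  rw [show (j:ℤ)-(k-1) = (j:ℤ) + (-k) + 1 from by ring,
      zpow_add₀ hs, zpow_add₀ hs, zpow_one, zpow_neg]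
  ring

lemma hscalC {x : ℚ} (hx : x ≠ 0) (r j : ℕ) (i k : ℤ) :
    cK x r j i k + (-x)^(k - 2*(i-k) - (j:ℤ) + 1) * uK x j i (k+1)
      + ((-x)^((k-1) - 2*(i-k+1) - (j:ℤ) + 1))⁻¹ * vK x j (k-1)
    = muK x j i k * (x^(2*((r:ℤ)-(j:ℤ)-(i-k))) - 1) * ((-x)^k - 1)
      - (-x)^(k - 2*(i-k) - (j:ℤ) + 1) * muK x j i (k+1) * (x^(2*(i-k)) - 1)
          * ((-x)^((j:ℤ)-k) - 1) := by
  have hs := hs_ne x hx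
  have hS : (-x)^((j:ℤ)) ≠ 0 := zpow_ne_zero _ hs
  have hT : (-x)^k ≠ 0 := zpow_ne_zero _ hs
  have hA : x^(2*i) ≠ 0 := zpow_ne_zero _ hx
  have hR : x^(2*(r:ℤ)) ≠ 0 := zpow_ne_zero _ hx
  rw [cK, uK, vK, muK, muK, pw1 hx r j, pwD1 hx j i k, pwD2 hx j i k,
      show 2*(i-(k+1))+(j:ℤ)+1 = 2*(i-(k+1))+(j:ℤ)+1 from rfl,
      pw2 hx j i (k+1),
      show (j:ℤ)-(k+1)+1 = (j:ℤ)-k from by ring,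
      show (k-1)+1 = k from by ring,
      pwvk hx j k, pwjk1 hx j k, pwj1 hx j,
      pwnegk hx k, pwnegk hx (k+1), pwneg2k hx k, pwneg2k hx (k+1),
      pw2i1 hx i, pwk1 hx k, pwjk hx j k, pw4 hx r j i k, pw7 hx i k, pw8 hx k,
      hT2 x hx k]
  field_simp
  ring

def az (x : ℚ) (r j : ℕ) (i k : ℤ) : ℚ :=
  (-x) ^ Ee j i k * Bz (x^2) (r-j) (i-k) * Bz (-x) j k

lemma pwv2 {x : ℚ} (hx : x ≠ 0) (j : ℕ) (k : ℤ) :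
    (-x)^(2*k-(j:ℤ)) = ((-x)^k)^2 / (-x)^((j:ℤ)) := by
  rw [show 2*k-(j:ℤ) = 2*k + (-(j:ℤ)) from by ring, zpow_add₀ (hs_ne x hx), zpow_neg,
      zsq, hT2 x hx k]
  ring

lemma termA {x : ℚ} (hx : x ≠ 0) {r j : ℕ} (hj : j ≤ r) (i k : ℤ) :
    LL x r j * az x r j i k + (x^(2*i+2) - 1) * az x r j (i+1) k
      - (x^(2*i) - 1) * (x - 1) * az x r j i k
      + x^(2*i-1) * (x^(2*((r:ℤ)-i+1)) - 1) * az x r j (i-1) k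
    = (-x)^(Ee j i k) *
        (cK x r j i k * (Bz (x^2) (r-j) (i-k) * Bz (-x) j k)
         + uK x j i k * (Bz (x^2) (r-j) (i-k+1) * Bz (-x) j (k-1))
         + vK x j k * (Bz (x^2) (r-j) (i-k-1) * Bz (-x) j (k+1))) := by
  have hs := hs_ne x hx
  have ht2 : (x^2) ≠ 0 := pow_ne_zero _ hx
  have hS : (-x)^((j:ℤ)) ≠ 0 := zpow_ne_zero _ hs
  have hT : (-x)^k ≠ 0 := zpow_ne_zero _ hs
  have hn : ((r - j : ℕ) : ℤ) = (r:ℤ) - (j:ℤ) := by omega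
  -- contiguous relations
  have hB1 := Bzcont (x^2) ht2 (r-j) (i-k)
  rw [tpow, tpow, hn] at hB1
  have hB2 := Bzcont (x^2) ht2 (r-j) (i-k-1)
  rw [show (i-k-1)+1 = i-k from by ring] at hB2
  rw [tpow, tpow, hn] at hB2
  have hC1 := Bzcont (-x) hs j (k-1)
  rw [show (k-1)+1 = k from by ring, show (j:ℤ)-(k-1) = (j:ℤ)-k+1 from by ring] at hC1
  have hC2 := Bzcont (-x) hs j k
  -- scalar splittings
  have hp1 : x^(2*k) * x^(2*((i-k)+1)) = x^(2*i+2) := by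
    rw [← zpow_add₀ hx, show 2*k + (2*((i-k)+1)) = 2*i+2 from by ring]
  have hs1 : x^(2*i+2) - 1 = x^(2*k) * (x^(2*((i-k)+1)) - 1) + (x^(2*k) - 1) := by
    rw [← hp1]; ring
  have hp2 : x^(2*((j:ℤ)-k)) * x^(2*((r:ℤ)-(j:ℤ)-(i-k-1))) = x^(2*((r:ℤ)-i+1)) := by
    rw [← zpow_add₀ hx, show 2*((j:ℤ)-k) + 2*((r:ℤ)-(j:ℤ)-(i-k-1)) = 2*((r:ℤ)-i+1) from by ring]
  have hs2 : x^(2*((r:ℤ)-i+1)) - 1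
      = x^(2*((j:ℤ)-k)) * (x^(2*((r:ℤ)-(j:ℤ)-(i-k-1))) - 1) + (x^(2*((j:ℤ)-k)) - 1) := by
    rw [← hp2]; ring
  have hs3 : x^(2*k) - 1 = ((-x)^k + 1) * ((-x)^k - 1) := by
    rw [hT2 x hx k]; ring
  have hs4 : x^(2*((j:ℤ)-k)) - 1 = ((-x)^((j:ℤ)-k) + 1) * ((-x)^((j:ℤ)-k) - 1) := by
    rw [hT2 x hx ((j:ℤ)-k)]; ring
  have hvKr : x^(2*i-1) * ((-x)^(2*(i-k)+(j:ℤ)-1))⁻¹ = -(-x)^(2*k-(j:ℤ)) := by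
    rw [pw5 hx i, pw3 hx j i k, pwv2 hx j k]
    field_simp
  have hcoef := hcoefA hx r j i k
  -- exponent shifts
  have hE1 : (-x)^(Ee j (i+1) k) = (-x)^(Ee j i k) * (-x)^(2*(i-k)+(j:ℤ)+1) := by
    rw [Ee_i_add, zpow_add₀ hs]
  have hE2 : (-x)^(Ee j (i-1) k) = (-x)^(Ee j i k) * ((-x)^(2*(i-k)+(j:ℤ)-1))⁻¹ := by
    rw [Ee_i_sub, zpow_sub₀ hs]; ring
  unfold az LL
  rw [show i+1-k = i-k+1 from by ring, show i-1-k = i-k-1 from by ring, hE1, hE2,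
      uK, vK]
  linear_combination
    ((-x)^(Ee j i k) * (-x)^(2*(i-k)+(j:ℤ)+1)) *
      ((Bz (x^2) (r-j) (i-k+1) * Bz (-x) j k) * hs1
        + (x^(2*k) * Bz (-x) j k) * hB1
        + (Bz (x^2) (r-j) (i-k+1) * Bz (-x) j k) * hs3
        + (((-x)^k + 1) * Bz (x^2) (r-j) (i-k+1)) * hC1)
    + ((-x)^(Ee j i k) * (x^(2*i-1) * ((-x)^(2*(i-k)+(j:ℤ)-1))⁻¹)) *
      ((Bz (x^2) (r-j) (i-k-1) * Bz (-x) j k) * hs2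
        - (x^(2*((j:ℤ)-k)) * Bz (-x) j k) * hB2
        + (Bz (x^2) (r-j) (i-k-1) * Bz (-x) j k) * hs4
        - (((-x)^((j:ℤ)-k) + 1) * Bz (x^2) (r-j) (i-k-1)) * hC2)
    + ((-x)^(Ee j i k) * (Bz (x^2) (r-j) (i-k) * Bz (-x) j k)) * hcoef
    + ((-x)^(Ee j i k) * ((-x)^((j:ℤ)-k) + 1) * ((-x)^(k+1) - 1)
        * Bz (x^2) (r-j) (i-k-1) * Bz (-x) j (k+1)) * hvKr

def Gr (x : ℚ) (r j : ℕ) (i k : ℤ) : ℚ :=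
  (-x)^(Ee j i k) * muK x j i k * (x^(2*((r:ℤ)-(j:ℤ)-(i-k))) - 1) * ((-x)^k - 1)
    * Bz (x^2) (r-j) (i-k) * Bz (-x) j k

lemma psi_step {x : ℚ} (hx : x ≠ 0) {r j : ℕ} (hj : j ≤ r) (i k : ℤ) :
    ((-x)^(Ee j i k) * cK x r j i k + (-x)^(Ee j i (k+1)) * uK x j i (k+1)
       + (-x)^(Ee j i (k-1)) * vK x j (k-1)) * (Bz (x^2) (r-j) (i-k) * Bz (-x) j k)
    = Gr x r j i k - Gr x r j i (k+1) := by
  have hs := hs_ne x hx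
  have ht2 : (x^2) ≠ 0 := pow_ne_zero _ hx
  have hn : ((r - j : ℕ) : ℤ) = (r:ℤ) - (j:ℤ) := by omega
  have hE3 : (-x)^(Ee j i (k+1)) = (-x)^(Ee j i k) * (-x)^(k - 2*(i-k) - (j:ℤ) + 1) := by
    rw [Ee_k_add, zpow_add₀ hs]
  have hE4 : (-x)^(Ee j i (k-1))
      = (-x)^(Ee j i k) * ((-x)^((k-1) - 2*(i-k+1) - (j:ℤ) + 1))⁻¹ := by
    rw [Ee_k_sub, zpow_sub₀ hs]; ring
  have hB := Bzcont (x^2) ht2 (r-j) (i-k-1)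
  rw [show (i-k-1)+1 = i-k from by ring] at hB
  rw [tpow, tpow, hn] at hB
  have hC := Bzcont (-x) hs j k
  have hscal := hscalC hx r j i k
  unfold Gr
  rw [hE3, hE4, show i-(k+1) = i-k-1 from by ring]
  linear_combination
    ((-x)^(Ee j i k) * (Bz (x^2) (r-j) (i-k) * Bz (-x) j k)) * hscal
    - ((-x)^(Ee j i k) * (-x)^(k - 2*(i-k) - (j:ℤ) + 1) * muK x j i (k+1)
        * ((-x)^(k+1) - 1) * Bz (-x) j (k+1)) * hB
    + ((-x)^(Ee j i k) * (-x)^(k - 2*(i-k) - (j:ℤ) + 1) * muK x j i (k+1)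
        * (x^(2*(i-k)) - 1) * Bz (x^2) (r-j) (i-k)) * hC

def SB (x : ℚ) (r j : ℕ) (i : ℤ) : ℚ := ∑ k ∈ Finset.range (r+2), az x r j i (k:ℤ)

lemma main_sum {x : ℚ} (hx : x ≠ 0) {r j : ℕ} (hj : j ≤ r) {i : ℤ}
    (hi0 : 0 ≤ i) (hir : i ≤ (r:ℤ)) :
    LL x r j * SB x r j i + (x^(2*i+2) - 1) * SB x r j (i+1)
      - (x^(2*i) - 1) * (x - 1) * SB x r j i
      + x^(2*i-1) * (x^(2*((r:ℤ)-i+1)) - 1) * SB x r j (i-1) = 0 := by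
  classical
  set t := x^2 with ht
  -- abbreviations
  set B : ℤ → ℚ := fun m => Bz (x^2) (r-j) m with hB
  set C : ℤ → ℚ := fun m => Bz (-x) j m with hC
  have step1 : LL x r j * SB x r j i + (x^(2*i+2) - 1) * SB x r j (i+1)
      - (x^(2*i) - 1) * (x - 1) * SB x r j i
      + x^(2*i-1) * (x^(2*((r:ℤ)-i+1)) - 1) * SB x r j (i-1)
      = ∑ k ∈ Finset.range (r+2),
          (LL x r j * az x r j i (k:ℤ) + (x^(2*i+2) - 1) * az x r j (i+1) (k:ℤ)
            - (x^(2*i) - 1) * (x - 1) * az x r j i (k:ℤ)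
            + x^(2*i-1) * (x^(2*((r:ℤ)-i+1)) - 1) * az x r j (i-1) (k:ℤ)) := by
    rw [SB, SB, SB, Finset.mul_sum, Finset.mul_sum, Finset.mul_sum, Finset.mul_sum,
        ← Finset.sum_add_distrib, ← Finset.sum_sub_distrib, ← Finset.sum_add_distrib]
  rw [step1]
  have step2 : ∀ k ∈ Finset.range (r+2),
      (LL x r j * az x r j i (k:ℤ) + (x^(2*i+2) - 1) * az x r j (i+1) (k:ℤ)
        - (x^(2*i) - 1) * (x - 1) * az x r j i (k:ℤ)
        + x^(2*i-1) * (x^(2*((r:ℤ)-i+1)) - 1) * az x r j (i-1) (k:ℤ))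
      = ((-x)^(Ee j i (k:ℤ)) * cK x r j i (k:ℤ) * (B (i-(k:ℤ)) * C (k:ℤ)))
        + ((-x)^(Ee j i (k:ℤ)) * uK x j i (k:ℤ) * (B (i-(k:ℤ)+1) * C ((k:ℤ)-1)))
        + ((-x)^(Ee j i (k:ℤ)) * vK x (j:ℕ) (k:ℤ) * (B (i-(k:ℤ)-1) * C ((k:ℤ)+1))) := by
    intro k _
    have := termA hx hj i (k:ℤ)
    simp only [hB, hC]
    linear_combination this
  rw [Finset.sum_congr rfl step2]
  rw [Finset.sum_add_distrib, Finset.sum_add_distrib]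
  -- U shift
  have hUshift : (∑ k ∈ Finset.range (r+2),
        (-x)^(Ee j i (k:ℤ)) * uK x j i (k:ℤ) * (B (i-(k:ℤ)+1) * C ((k:ℤ)-1)))
      = ∑ k ∈ Finset.range (r+2),
        (-x)^(Ee j i ((k:ℤ)+1)) * uK x j i ((k:ℤ)+1) * (B (i-(k:ℤ)) * C (k:ℤ)) := by
    rw [Finset.sum_range_succ' _ (r+1), Finset.sum_range_succ _ (r+1)]
    have h0 : (-x)^(Ee j i ((0:ℕ):ℤ)) * uK x j i ((0:ℕ):ℤ)
        * (B (i-((0:ℕ):ℤ)+1) * C (((0:ℕ):ℤ)-1)) = 0 := by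
      have : C (((0:ℕ):ℤ)-1) = 0 := Bz_of_neg _ _ (by norm_num)
      rw [this]; ring
    have htop : (-x)^(Ee j i (((r+1:ℕ):ℤ)+1)) * uK x j i (((r+1:ℕ):ℤ)+1)
        * (B (i-((r+1:ℕ):ℤ)) * C ((r+1:ℕ):ℤ)) = 0 := by
      have : B (i-((r+1:ℕ):ℤ)) = 0 := Bz_of_neg _ _ (by push_cast; omega)
      rw [this]; ring
    rw [h0, add_zero]
    have hcong : ∀ k ∈ Finset.range (r+1),
        (-x)^(Ee j i ((k+1:ℕ):ℤ)) * uK x j i ((k+1:ℕ):ℤ)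
          * (B (i-((k+1:ℕ):ℤ)+1) * C (((k+1:ℕ):ℤ)-1))
        = (-x)^(Ee j i ((k:ℤ)+1)) * uK x j i ((k:ℤ)+1) * (B (i-(k:ℤ)) * C (k:ℤ)) := by
      intro k _
      have e1 : ((k+1:ℕ):ℤ) = (k:ℤ)+1 := by push_cast; ring
      rw [e1, show i-((k:ℤ)+1)+1 = i-(k:ℤ) from by ring,
          show (k:ℤ)+1-1 = (k:ℤ) from by ring]
    rw [Finset.sum_congr rfl hcong, htop, add_zero]
  -- V shift
  have hVshift : (∑ k ∈ Finset.range (r+2),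
        (-x)^(Ee j i (k:ℤ)) * vK x j (k:ℤ) * (B (i-(k:ℤ)-1) * C ((k:ℤ)+1)))
      = ∑ k ∈ Finset.range (r+2),
        (-x)^(Ee j i ((k:ℤ)-1)) * vK x j ((k:ℤ)-1) * (B (i-(k:ℤ)) * C (k:ℤ)) := by
    rw [Finset.sum_range_succ _ (r+1), Finset.sum_range_succ' _ (r+1)]
    have htop : (-x)^(Ee j i ((r+1:ℕ):ℤ)) * vK x j ((r+1:ℕ):ℤ)
        * (B (i-((r+1:ℕ):ℤ)-1) * C (((r+1:ℕ):ℤ)+1)) = 0 := by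
      have : B (i-((r+1:ℕ):ℤ)-1) = 0 := Bz_of_neg _ _ (by push_cast; omega)
      rw [this]; ring
    have h0 : (-x)^(Ee j i (((0:ℕ):ℤ)-1)) * vK x j (((0:ℕ):ℤ)-1)
        * (B (i-((0:ℕ):ℤ)) * C ((0:ℕ):ℤ)) = 0 := by
      have : vK x j (((0:ℕ):ℤ)-1) = 0 := by
        rw [vK, show (((0:ℕ):ℤ)-1)+1 = 0 from by norm_num, zpow_zero]
        ring
      rw [this]; ring
    rw [htop, add_zero, h0, add_zero]
    apply Finset.sum_congr rfl
    intro k _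
    have e1 : ((k+1:ℕ):ℤ) = (k:ℤ)+1 := by push_cast; ring
    rw [e1, show (k:ℤ)+1-1 = (k:ℤ) from by ring, show i-((k:ℤ)+1) = i-(k:ℤ)-1 from by ring]
  rw [hUshift, hVshift, ← Finset.sum_add_distrib, ← Finset.sum_add_distrib]
  have step3 : ∀ k ∈ Finset.range (r+2),
      ((-x)^(Ee j i (k:ℤ)) * cK x r j i (k:ℤ) * (B (i-(k:ℤ)) * C (k:ℤ))
        + (-x)^(Ee j i ((k:ℤ)+1)) * uK x j i ((k:ℤ)+1) * (B (i-(k:ℤ)) * C (k:ℤ))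
        + (-x)^(Ee j i ((k:ℤ)-1)) * vK x j ((k:ℤ)-1) * (B (i-(k:ℤ)) * C (k:ℤ)))
      = Gr x r j i (k:ℤ) - Gr x r j i ((k:ℤ)+1) := by
    intro k _
    have := psi_step hx hj i (k:ℤ)
    simp only [hB, hC]
    linear_combination this
  rw [Finset.sum_congr rfl step3]
  have tele : ∑ k ∈ Finset.range (r+2), (Gr x r j i (k:ℤ) - Gr x r j i ((k:ℤ)+1))
      = Gr x r j i ((0:ℕ):ℤ) - Gr x r j i ((r+2:ℕ):ℤ) := by
    have := Finset.sum_range_sub' (fun k : ℕ => Gr x r j i (k:ℤ)) (r+2)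
    rw [← this]
    apply Finset.sum_congr rfl
    intro k _
    have e1 : ((k+1:ℕ):ℤ) = (k:ℤ)+1 := by push_cast; ring
    rw [e1]
  rw [tele]
  have hGr0 : Gr x r j i ((0:ℕ):ℤ) = 0 := by
    rw [Gr, show ((0:ℕ):ℤ) = (0:ℤ) from rfl, zpow_zero]
    ring
  have hGrtop : Gr x r j i ((r+2:ℕ):ℤ) = 0 := by
    rw [Gr]
    have : Bz (x^2) (r-j) (i-((r+2:ℕ):ℤ)) = 0 := Bz_of_neg _ _ (by push_cast; omega)
    rw [this]
    ring
  rw [hGr0, hGrtop]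
  ring



lemma natExp_cast {iN j k : ℕ} (hk : k ≤ iN) :
    (↑((iN - k) * (iN + j - k) + k * (k - 1) / 2) : ℤ) = Ee j (iN:ℤ) (k:ℤ) := by
  have h1 : (↑((iN-k)*(iN+j-k)) : ℤ) = ((iN:ℤ)-(k:ℤ))*((iN:ℤ)+(j:ℤ)-(k:ℤ)) := by
    rw [Nat.cast_mul, Nat.cast_sub hk, Nat.cast_sub (by omega : k ≤ iN + j), Nat.cast_add]
  have h2 : (↑(k*(k-1)/2) : ℤ) = (k:ℤ)*((k:ℤ)-1)/2 := by
    have hb : (↑(k*(k-1)) : ℤ) = (k:ℤ)*((k:ℤ)-1) := by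
      cases k with
      | zero => simp
      | succ k' =>
          rw [show (k'+1) - 1 = k' from rfl]
          push_cast
          ring
    rw [← hb]
    generalize k*(k-1) = a
    omega
  rw [Nat.cast_add, h1, h2, Ee]

lemma SB_neg {x : ℚ} (r j : ℕ) : SB x r j (-1) = 0 := by
  apply Finset.sum_eq_zero
  intro k _
  rw [az, Bz_of_neg _ _ (by omega : (-1:ℤ) - (k:ℤ) < 0)]
  ring

lemma SB_top {x : ℚ} {r j : ℕ} (hj : j ≤ r) : SB x r j ((r:ℤ)+1) = 0 := by
  apply Finset.sum_eq_zero
  intro k _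
  by_cases hkj : (j:ℤ) < (k:ℤ)
  · rw [az, Bz_of_gt (-x) j hkj]
    ring
  · rw [az, Bz_of_gt (x^2) (r-j) (show ((r-j:ℕ):ℤ) < (r:ℤ)+1-(k:ℤ) by omega)]
    ring

lemma QQ_eq {q : ℤ} {r j : ℕ} (hj : j ≤ r) {i : ℤ} (hi0 : 0 ≤ i) (hir : i ≤ (r:ℤ)) :
    QQ q r j i = (-1)^(i.toNat) * SB (q:ℚ) r j i := by
  rw [QQ, if_pos ⟨hi0, hir⟩]
  congr 1
  have hi : ((i.toNat : ℕ) : ℤ) = i := Int.toNat_of_nonneg hi0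
  set iN := i.toNat with hiN
  rw [SB]
  have hsub : Finset.range (iN + 1) ⊆ Finset.range (r + 2) := by
    apply Finset.range_subset_range.mpr
    omega
  rw [← Finset.sum_subset hsub (by
    intro k _ hk
    simp only [Finset.mem_range, not_lt] at hk
    rw [az, Bz_of_neg _ _ (by omega : i - (k:ℤ) < 0)]
    ring)]
  apply Finset.sum_congr rfl
  intro k hk
  simp only [Finset.mem_range] at hk
  have hki : k ≤ iN := by omega
  rw [az, ← hi, ← natExp_cast (j := j) hki, zpow_natCast,
      show (iN:ℤ) - (k:ℤ) = ((iN - k : ℕ) : ℤ) from by omega, Bz_natCast, Bz_natCast]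

lemma QQ_neg_one (q : ℤ) (r j : ℕ) : QQ q r j (-1) = 0 := by
  rw [QQ, if_neg]
  push_neg
  intro h
  omega

lemma QQ_top (q : ℤ) (r j : ℕ) : QQ q r j ((r:ℤ)+1) = 0 := by
  rw [QQ, if_neg]
  push_neg
  intro h
  omega


/-- The eigenvector identity verifying that `l_{2r,q}^j` is an eigenvalue of the Hecke operator
`Q_Y`: with `Q_{-1} = Q_{r+1} = 0`, for all `0 ≤ i ≤ r`,
`l_{2r,q}^j · Q_i = ((q^{2i+2}-1)/(q²-1))·Q_{i+1} + ((q^{2i}-1)(q-1)/(q²-1))·Q_i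
  + (q^{2i-1}(q^{2(r-i+1)}-1)/(q²-1))·Q_{i-1}`; in particular `Q_0 = 1` and
`Q_1 = l_{2r,q}^j · Q_0`. -/
theorem stmt_7 (q : ℤ) (hq : 2 ≤ q) (r : ℕ) (hr : 1 ≤ r) (j : ℕ) (hj : j ≤ r) :
    (∀ i : ℤ, 0 ≤ i → i ≤ (r : ℤ) →
      lvalz (2 * r) q (j : ℤ) * QQ q r j i =
        (((q : ℚ) ^ (2 * i + 2) - 1) / ((q : ℚ) ^ 2 - 1)) * QQ q r j (i + 1) +
          ((((q : ℚ) ^ (2 * i) - 1) * ((q : ℚ) - 1)) / ((q : ℚ) ^ 2 - 1)) * QQ q r j i +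
          (((q : ℚ) ^ (2 * i - 1) * ((q : ℚ) ^ (2 * ((r : ℤ) - i + 1)) - 1)) /
              ((q : ℚ) ^ 2 - 1)) * QQ q r j (i - 1)) ∧
    QQ q r j 0 = 1 ∧ QQ q r j 1 = lvalz (2 * r) q (j : ℤ) * QQ q r j 0 := by
  have hx2' : (2:ℚ) ≤ (q:ℚ) := by exact_mod_cast hq
  have hx : (q:ℚ) ≠ 0 := by intro h; rw [h] at hx2'; norm_num at hx2'
  have hden : ((q:ℚ)^2 - 1) ≠ 0 := by nlinarith
  set x := (q:ℚ) with hxdef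
  have hLv : lvalz (2*r) q (j:ℤ) = LL x r j / (x^2 - 1) := by
    rw [lvalz, LL, show (((2*r:ℕ)):ℤ) + 1 - (j:ℤ) = 2*(r:ℤ)+1-(j:ℤ) from by push_cast; ring]
  have main : ∀ i : ℤ, 0 ≤ i → i ≤ (r : ℤ) →
      lvalz (2 * r) q (j : ℤ) * QQ q r j i =
        ((x ^ (2 * i + 2) - 1) / (x ^ 2 - 1)) * QQ q r j (i + 1) +
          (((x ^ (2 * i) - 1) * (x - 1)) / (x ^ 2 - 1)) * QQ q r j i +
          ((x ^ (2 * i - 1) * (x ^ (2 * ((r : ℤ) - i + 1)) - 1)) /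
              (x ^ 2 - 1)) * QQ q r j (i - 1) := by
    intro i hi0 hir
    have hQi := QQ_eq (q := q) hj hi0 hir
    have hQip : QQ q r j (i+1) = -((-1:ℚ)^(i.toNat) * SB x r j (i+1)) := by
      rcases eq_or_lt_of_le hir with he | hlt
      · rw [he, QQ_top, SB_top hj]; ring
      · rw [QQ_eq (q := q) hj (by omega) (by omega),
            show (i+1).toNat = i.toNat + 1 from by omega, pow_succ]
        ring
    have hQim : QQ q r j (i-1) = -((-1:ℚ)^(i.toNat) * SB x r j (i-1)) := by
      rcases eq_or_lt_of_le hi0 with he | hlt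
      · rw [← he, show (0:ℤ)-1 = -1 from by norm_num, QQ_neg_one, SB_neg]; ring
      · rw [QQ_eq (q := q) hj (by omega) (by omega),
            show i.toNat = (i-1).toNat + 1 from by omega, pow_succ]
        ring
    have hms := main_sum (x := x) hx hj hi0 hir
    rw [hLv, hQi, hQip, hQim]
    linear_combination ((-1:ℚ)^(i.toNat) / (x^2-1)) * hms
  have hQ0 : QQ q r j 0 = 1 := by
    rw [QQ, if_pos ⟨le_refl 0, Int.natCast_nonneg r⟩]
    simp [qbinom_zero]
  refine ⟨main, hQ0, ?_⟩
  have h0 := main 0 le_rfl (Int.natCast_nonneg r)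
  have e1 : x^(2*(0:ℤ)+2) = x^2 := by
    rw [show 2*(0:ℤ)+2 = ((2:ℕ):ℤ) from by norm_num, zpow_natCast]
  have e2 : x^(2*(0:ℤ)) = 1 := by norm_num
  rw [e1, e2, show (0:ℤ)-1 = -1 from by norm_num, show (0:ℤ)+1 = 1 from by norm_num,
      QQ_neg_one, div_self hden] at h0
  linear_combination -h0
end

section
/- Let q be a prime power, r ≥ 1, and let Y, Y'' be two maximal isotropic subspaces of a nondegenerate hermitian space V of dimension 2r over F_{q²}. Suppose dim(Y''/(Y ∩ Y'')) = i with 1 ≤ i ≤ r. Then the number of maximal isotropic subspaces Y' of V with dim(Y'/(Y ∩ Y')) = i and dim(Y'/(Y' ∩ Y'')) = 1 equals (q^{2i}-1)(q-1)/(q²-1). -/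
/-!
Every `Y'` in question contains `W = Y ∩ Y''`, so `Y' ↦ Y' ∩ Y''` maps it to a hyperplane `C` of
`Y''` through `W`. Taking orthogonals, these hyperplanes correspond to the `(r + 1)`-dimensional
subspaces between `Y''` and `Wᗮ`, of which there are `(q^{2i} - 1)/(q² - 1)`. Fix such a `C` and a
hyperbolic pair `w ∈ Y''`, `w' ∈ Cᗮ`: the Lagrangians through `C` other than `Y''` are the
`C + K (a w + w')` with `a + a^q = 0`, so there are `q` of them, and exactly one of them,
`C + (Y ∩ Cᗮ)`, meets `Y` in more than `W`.
-/

open Module Submodule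

theorem Nat.card_eq_mul_of_card_fiber {α β : Type*} [Finite α] [Finite β] (f : α → β) {k : ℕ}
    (hf : ∀ b, Nat.card {a // f a = b} = k) : Nat.card α = Nat.card β * k := by
  have := Fintype.ofFinite β
  rw [← Nat.card_congr (Equiv.sigmaFiberEquiv f), Nat.card_sigma]
  simp [hf]

theorem Nat.card_subtype_and_ne {α : Type*} [Finite α] {p : α → Prop} {a : α} (ha : p a) :
    Nat.card {x // p x ∧ x ≠ a} = Nat.card {x // p x} - 1 := by
  have := Set.ncard_sdiff_singleton_of_mem (s := {x | p x}) ha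
  rw [← Nat.card_coe_set_eq, ← Nat.card_coe_set_eq] at this
  exact this

namespace Submodule

variable {K V : Type*} [Field K] [AddCommGroup V] [Module K V] [FiniteDimensional K V]

theorem sup_span_singleton_eq {C L : Submodule K V} {u : V} (hCL : C ≤ L)
    (hL : finrank K L = finrank K C + 1) (huL : u ∈ L) (huC : u ∉ C) : C ⊔ K ∙ u = L :=
  eq_of_le_of_finrank_eq (sup_le hCL ((span_singleton_le_iff_mem u L).2 huL))
    (by rw [finrank_sup_span_singleton huC, hL])

theorem exists_mem_notMem_of_finrank_lt {C L : Submodule K V} (h : finrank K C < finrank K L) :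
    ∃ u ∈ L, u ∉ C := by
  by_contra! hLC
  exact (finrank_mono (show L ≤ C from hLC)).not_gt h

theorem inf_eq_of_ne {C L₁ L₂ : Submodule K V} (h₁ : C ≤ L₁) (h₂ : C ≤ L₂)
    (hL₁ : finrank K L₁ = finrank K C + 1) (hL₂ : finrank K L₂ = finrank K C + 1)
    (hne : L₁ ≠ L₂) : L₁ ⊓ L₂ = C := by
  by_contra hC
  have hlt : finrank K C < finrank K ↥(L₁ ⊓ L₂) :=
    finrank_lt_finrank_of_lt (lt_of_le_of_ne (le_inf h₁ h₂) (Ne.symm hC))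
  have e₁ : L₁ ⊓ L₂ = L₁ := eq_of_le_of_finrank_le inf_le_left (by omega)
  have e₂ : L₁ ⊓ L₂ = L₂ := eq_of_le_of_finrank_le inf_le_right (by omega)
  exact hne (e₁.symm.trans e₂)

theorem card_mem_and_notMem [Finite K] {A C : Submodule K V} (hAC : A ≤ C) :
    Nat.card {x // x ∈ C ∧ x ∉ A} = Nat.card K ^ finrank K C - Nat.card K ^ finrank K A := by
  have := Module.finite_of_finite K (M := V)
  rw [← natCard_eq_pow_finrank, ← natCard_eq_pow_finrank, ← SetLike.coe_sort_coe,
    ← SetLike.coe_sort_coe, Nat.card_coe_set_eq, Nat.card_coe_set_eq,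
    ← Set.ncard_sdiff (SetLike.coe_subset_coe.2 hAC), ← Nat.card_coe_set_eq]
  rfl

theorem card_covers_mul [Finite K] {A U : Submodule K V} (hAU : A ≤ U) :
    Nat.card {C : Submodule K V // A ≤ C ∧ C ≤ U ∧ finrank K C = finrank K A + 1} *
      (Nat.card K - 1) = Nat.card K ^ (finrank K U - finrank K A) - 1 := by
  have := Module.finite_of_finite K (M := V)
  set Q := Nat.card K
  set a := finrank K A
  let f : {x // x ∈ U ∧ x ∉ A} → {C : Submodule K V // A ≤ C ∧ C ≤ U ∧ finrank K C = a + 1} :=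
    fun x => ⟨A ⊔ K ∙ x.1, le_sup_left, sup_le hAU ((span_singleton_le_iff_mem _ _).2 x.2.1),
      finrank_sup_span_singleton x.2.2⟩
  have hfib : ∀ C, Nat.card {x // f x = C} = Q ^ (a + 1) - Q ^ a := by
    rintro ⟨C, hAC, hCU, hC⟩
    have hcard := card_mem_and_notMem hAC
    rw [hC] at hcard
    rw [← hcard]
    refine Nat.card_congr
      { toFun x := ⟨x.1.1, ?_, x.1.2.2⟩
        invFun y := ⟨⟨y.1, hCU y.2.1, y.2.2⟩,
          Subtype.ext (sup_span_singleton_eq hAC hC y.2.1 y.2.2)⟩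
        left_inv _ := rfl
        right_inv _ := rfl }
    have hx : A ⊔ K ∙ x.1.1 = C := congrArg Subtype.val x.2
    exact hx.le (mem_sup_right (mem_span_singleton_self _))
  have hcard := Nat.card_eq_mul_of_card_fiber f hfib
  obtain ⟨m, hm⟩ := Nat.exists_eq_add_of_le (finrank_mono hAU : a ≤ finrank K U)
  rw [card_mem_and_notMem hAU, hm, pow_add, pow_succ, ← Nat.mul_sub_one, ← Nat.mul_sub_one]
    at hcard
  rw [hm, Nat.add_sub_cancel_left]
  exact Nat.eq_of_mul_eq_mul_left (pow_pos Nat.card_pos a) (by rw [hcard]; ring)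

end Submodule

section FiniteField

open Polynomial

theorem Polynomial.card_isRoot_le {K : Type*} [Field K] {p : K[X]} (hp : p ≠ 0) :
    Nat.card {x // p.IsRoot x} ≤ p.natDegree := by
  classical
  calc Nat.card {x // p.IsRoot x} = p.roots.toFinset.card := by
        rw [← Nat.card_eq_finsetCard]
        exact Nat.card_congr (Equiv.subtypeEquivRight fun x => by simp [hp])
    _ ≤ p.natDegree := (Multiset.toFinset_card_le _).trans (card_roots' p)

theorem card_isRoot_X_pow_add_le {K : Type*} [Field K] {q : ℕ} (hq : 1 < q) (c : K) :
    Nat.card {x : K // (X ^ q + C c * X : K[X]).IsRoot x} ≤ q := by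
  have hdeg : (X ^ q + C c * X : K[X]).natDegree = q := by
    rw [natDegree_add_eq_left_of_natDegree_lt] <;> simp only [natDegree_X_pow]
    exact (natDegree_C_mul_le c X).trans_lt (natDegree_X_le.trans_lt hq)
  have hp : (X ^ q + C c * X : K[X]) ≠ 0 := fun h => by rw [h, natDegree_zero] at hdeg; omega
  exact (card_isRoot_le hp).trans hdeg.le

theorem exists_ringHom_pow_eq_of_card_eq_sq {K : Type*} [Field K] [Fintype K] {q p n : ℕ}
    (hp : p.Prime) (hq : q = p ^ n) (hK : Fintype.card K = q ^ 2) :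
    ∃ σ : K →+* K, (∀ a, σ a = a ^ q) ∧ ∀ a, σ (σ a) = a := by
  subst hq
  have : Fact p.Prime := ⟨hp⟩
  have : CharP K p := charP_of_card_eq_prime_pow (f := n * 2) (by rw [hK, pow_mul])
  refine ⟨iterateFrobenius K p n, iterateFrobenius_def p n, fun a => ?_⟩
  rw [iterateFrobenius_def, iterateFrobenius_def, ← pow_mul, ← sq, ← hK, FiniteField.pow_card]

/-- The image and the kernel of the trace `a ↦ a + σ a` have at most `q` elements each, lying in
the roots of `X ^ q - X` and of `X ^ q + X` respectively, and their sizes multiply to `q²`. -/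
theorem card_add_eq_zero_of_card_eq_sq {K : Type*} [Field K] [Fintype K] {q : ℕ} {σ : K →+* K}
    (hσ : ∀ a, σ a = a ^ q) (hK : Fintype.card K = q ^ 2) :
    Nat.card {a : K // a + σ a = 0} = q := by
  have hq : 1 < q := by
    have := Fintype.one_lt_card (α := K)
    rw [hK] at this
    exact (Nat.one_lt_pow_iff two_ne_zero).1 this
  let T : K →+ K := AddMonoidHom.id K + σ.toAddMonoidHom
  have hker : Nat.card T.ker ≤ q := by
    refine (Nat.card_congr (Equiv.subtypeEquivRight fun a => ?_)).le.trans
      (card_isRoot_X_pow_add_le hq 1)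
    simp [T, hσ, add_comm]
  have hrange : Nat.card T.range ≤ q := by
    refine (Nat.card_mono (Set.toFinite _) fun b hb => ?_).trans
      (card_isRoot_X_pow_add_le hq (-1))
    obtain ⟨a, rfl⟩ := hb
    have hσσ : σ (σ a) = a := by rw [hσ, hσ, ← pow_mul, ← sq, ← hK, FiniteField.pow_card]
    show (X ^ q + C (-1) * X : K[X]).IsRoot (a + σ a)
    rw [IsRoot.def, eval_add, eval_pow, eval_mul, eval_C, eval_X, ← hσ, map_add, hσσ]
    ring
  have hmul : Nat.card T.ker * Nat.card T.range = q * q := by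
    rw [← AddSubgroup.index_ker, AddSubgroup.card_mul_index, Nat.card_eq_fintype_card, hK, sq]
  show Nat.card T.ker = q
  nlinarith

end FiniteField

section Sesquilinear

variable {K V : Type*} [Field K] [AddCommGroup V] [Module K V]
variable {σ : K →+* K} {B : V →ₛₗ[σ] V →ₗ[K] K}

local notation:max S "ᗮᴮ" => Submodule.orthogonalBilin B S

theorem le_orthogonalBilin_of_le {C L : Submodule K V} (hL : Lᗮᴮ = L) (hCL : C ≤ L) : L ≤ Cᗮᴮ :=
  hL ▸ orthogonalBilin_le hCL

theorem orthogonalBilin_sup (S T : Submodule K V) : (S ⊔ T)ᗮᴮ = Sᗮᴮ ⊓ Tᗮᴮ := by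
  ext x
  simp only [mem_orthogonalBilin_iff, mem_inf]
  refine ⟨fun hx => ⟨fun n hn => hx n (mem_sup_left hn), fun n hn => hx n (mem_sup_right hn)⟩,
    fun ⟨hS, hT⟩ n hn => ?_⟩
  obtain ⟨s, hs, t, ht, rfl⟩ := mem_sup.1 hn
  rw [map_add, LinearMap.add_apply, hS s hs, hT t ht, add_zero]

theorem mem_orthogonalBilin_span_singleton {u x : V} : x ∈ (K ∙ u)ᗮᴮ ↔ B u x = 0 := by
  refine ⟨fun hx => hx u (mem_span_singleton_self u), fun hx n hn => ?_⟩
  obtain ⟨a, rfl⟩ := mem_span_singleton.1 hn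
  simp [hx]

theorem span_singleton_le_orthogonalBilin {x : V} (hx : B x x = 0) : K ∙ x ≤ (K ∙ x)ᗮᴮ := by
  intro y hy
  obtain ⟨a, rfl⟩ := mem_span_singleton.1 hy
  rw [mem_orthogonalBilin_span_singleton]
  simp [hx]

theorem sup_le_orthogonalBilin (hB : B.IsRefl) {S T : Submodule K V} (hS : S ≤ Sᗮᴮ)
    (hT : T ≤ Tᗮᴮ) (hST : T ≤ Sᗮᴮ) : S ⊔ T ≤ (S ⊔ T)ᗮᴮ := by
  rw [orthogonalBilin_sup]
  exact sup_le (le_inf hS fun s hs t ht => hB _ _ (hST ht s hs)) (le_inf hST hT)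

variable [FiniteDimensional K V]

theorem mem_iff_apply_eq_zero {C L : Submodule K V} {u x : V} (hL : Lᗮᴮ = L) (hCL : C ≤ L)
    (hrank : finrank K L = finrank K C + 1) (huL : u ∈ L) (huC : u ∉ C) (hx : x ∈ Cᗮᴮ) :
    x ∈ L ↔ B u x = 0 := by
  rw [← hL, ← sup_span_singleton_eq hCL hrank huL huC, orthogonalBilin_sup, mem_inf,
    mem_orthogonalBilin_span_singleton]
  exact and_iff_right hx

variable [RingHomInvPair σ σ]

theorem finrank_orthogonalBilin_add_finrank (hker : LinearMap.ker B = ⊥) (S : Submodule K V) :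
    finrank K Sᗮᴮ + finrank K S = finrank K V := by
  have hperp : Sᗮᴮ = (S.map B).dualCoannihilator := by
    ext x
    simp [mem_dualCoannihilator]
  have hmap : finrank K (S.map B) = finrank K S := by
    let e := S.equivMapOfInjective B (LinearMap.ker_eq_bot.1 hker)
    have := lift_rank_eq_of_equiv_equiv σ e.toAddEquiv ⟨σ.injective, σ.surjective⟩ e.map_smulₛₗ
    simpa [finrank] using (congrArg Cardinal.toNat this).symm
  rw [hperp, ← hmap, add_comm]
  exact Subspace.finrank_add_finrank_dualCoannihilator_eq _

theorem orthogonalBilin_orthogonalBilin (hB : B.IsRefl) (hker : LinearMap.ker B = ⊥)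
    (S : Submodule K V) : Sᗮᴮᗮᴮ = S := by
  have h₁ := finrank_orthogonalBilin_add_finrank hker S
  have h₂ := finrank_orthogonalBilin_add_finrank hker Sᗮᴮ
  exact (eq_of_le_of_finrank_le (le_orthogonalBilin_orthogonalBilin hB) (by omega)).symm

theorem orthogonalBilin_eq_self_iff (hker : LinearMap.ker B = ⊥) {r : ℕ}
    (hdim : finrank K V = 2 * r) {L : Submodule K V} :
    Lᗮᴮ = L ↔ L ≤ Lᗮᴮ ∧ finrank K L = r := by
  have := finrank_orthogonalBilin_add_finrank hker L
  refine ⟨fun hL => ⟨hL.ge, by rw [hL] at this; omega⟩, fun ⟨hiso, hL⟩ => ?_⟩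
  exact (eq_of_le_of_finrank_eq hiso (by omega)).symm

theorem finrank_eq_of_orthogonalBilin_eq_self (hker : LinearMap.ker B = ⊥) {r : ℕ}
    (hdim : finrank K V = 2 * r) {L : Submodule K V} (hL : Lᗮᴮ = L) : finrank K L = r :=
  ((orthogonalBilin_eq_self_iff hker hdim).1 hL).2

theorem sup_span_singleton_orthogonalBilin_eq (hB : B.IsRefl) (hker : LinearMap.ker B = ⊥)
    {r : ℕ} (hdim : finrank K V = 2 * r) {C : Submodule K V} {x : V} (hCC : C ≤ Cᗮᴮ)
    (hC : finrank K C + 1 = r) (hx : x ∈ Cᗮᴮ) (hxx : B x x = 0) (hxC : x ∉ C) :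
    (C ⊔ K ∙ x)ᗮᴮ = C ⊔ K ∙ x :=
  (orthogonalBilin_eq_self_iff hker hdim).2
    ⟨sup_le_orthogonalBilin hB hCC (span_singleton_le_orthogonalBilin hxx)
      ((span_singleton_le_iff_mem _ _).2 hx), by rw [finrank_sup_span_singleton hxC, hC]⟩

/-- `X = Y ∩ Y'` and `W = Y ∩ Y''` have the same dimension and `X + W` lies in
`(Y + Y' ∩ Y'')ᗮ`, whose dimension exceeds that of `X ∩ W` by one only; hence `X = W`. -/
theorem inf_eq_inf_of_finrank_inf_eq (hker : LinearMap.ker B = ⊥) {r : ℕ}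
    (hdim : finrank K V = 2 * r) {Y Y' Y'' : Submodule K V}
    (hY : Yᗮᴮ = Y) (hY' : Y' ≤ Y'ᗮᴮ) (hY'' : Y'' ≤ Y''ᗮᴮ)
    (hZ : finrank K ↥(Y' ⊓ Y'') + 1 = r)
    (hk : finrank K ↥(Y ⊓ Y') = finrank K ↥(Y ⊓ Y'')) : Y ⊓ Y' = Y ⊓ Y'' := by
  have hYr : finrank K Y = r := finrank_eq_of_orthogonalBilin_eq_self hker hdim hY
  have hYZ : Y ⊓ (Y' ⊓ Y'') = (Y ⊓ Y') ⊓ (Y ⊓ Y'') := inf_inf_distrib_left _ _ _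
  have hle : Y ⊓ Y' ⊔ Y ⊓ Y'' ≤ (Y ⊔ Y' ⊓ Y'')ᗮᴮ := by
    rw [orthogonalBilin_sup, hY]
    exact sup_le
      (le_inf inf_le_left (inf_le_right.trans (hY'.trans (orthogonalBilin_le inf_le_left))))
      (le_inf inf_le_left (inf_le_right.trans (hY''.trans (orthogonalBilin_le inf_le_right))))
  have h₁ := finrank_sup_add_finrank_inf_eq (Y ⊓ Y') (Y ⊓ Y'')
  have h₂ := finrank_sup_add_finrank_inf_eq Y (Y' ⊓ Y'')
  have h₃ := finrank_orthogonalBilin_add_finrank hker (Y ⊔ Y' ⊓ Y'')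
  have h₄ := finrank_mono hle
  rw [hYZ] at h₂
  have e₁ := eq_of_le_of_finrank_le (inf_le_left : (Y ⊓ Y') ⊓ (Y ⊓ Y'') ≤ Y ⊓ Y') (by omega)
  have e₂ := eq_of_le_of_finrank_le (inf_le_right : (Y ⊓ Y') ⊓ (Y ⊓ Y'') ≤ Y ⊓ Y'') (by omega)
  exact e₁.symm.trans e₂

theorem finrank_inf_orthogonalBilin (hker : LinearMap.ker B = ⊥) {r : ℕ}
    (hdim : finrank K V = 2 * r) {Y Y'' C : Submodule K V} (hY : Yᗮᴮ = Y)
    (hWC : Y ⊓ Y'' ≤ C) (hCY'' : C ≤ Y'') (hC : finrank K C + 1 = r) :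
    finrank K ↥(Y ⊓ Cᗮᴮ) = finrank K ↥(Y ⊓ Y'') + 1 := by
  have hYr : finrank K Y = r := finrank_eq_of_orthogonalBilin_eq_self hker hdim hY
  have hYC : Y ⊓ C = Y ⊓ Y'' := le_antisymm (inf_le_inf_left _ hCY'') (le_inf inf_le_left hWC)
  have hperp : Y ⊓ Cᗮᴮ = (Y ⊔ C)ᗮᴮ := by rw [orthogonalBilin_sup, hY]
  have h₁ := finrank_sup_add_finrank_inf_eq Y C
  have h₂ := finrank_orthogonalBilin_add_finrank hker (Y ⊔ C)
  rw [hYC] at h₁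
  rw [hperp]
  omega

/-- The exceptional Lagrangian is `L₀ = C + (Y ∩ Cᗮ)`. -/
theorem exists_lagrangian_finrank_inf_eq_iff_ne (hB : B.IsRefl) (hker : LinearMap.ker B = ⊥)
    {r : ℕ} (hdim : finrank K V = 2 * r) {Y Y'' C : Submodule K V}
    (hY : Yᗮᴮ = Y) (hY'' : Y''ᗮᴮ = Y'') (hWC : Y ⊓ Y'' ≤ C) (hCY'' : C ≤ Y'')
    (hC : finrank K C + 1 = r) :
    ∃ L₀, L₀ᗮᴮ = L₀ ∧ C ≤ L₀ ∧ ∀ L, Lᗮᴮ = L → C ≤ L →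
      (finrank K ↥(Y ⊓ L) = finrank K ↥(Y ⊓ Y'') ↔ L ≠ L₀) := by
  set M := Y ⊓ Cᗮᴮ
  have hM : finrank K M = finrank K ↥(Y ⊓ Y'') + 1 :=
    finrank_inf_orthogonalBilin hker hdim hY hWC hCY'' hC
  have hCC : C ≤ Cᗮᴮ := hCY''.trans (le_orthogonalBilin_of_le hY'' hCY'')
  have hCM : C ⊓ M = Y ⊓ Y'' := by
    rw [inf_left_comm, inf_eq_left.2 hCC]
    exact le_antisymm (inf_le_inf_left _ hCY'') (le_inf inf_le_left hWC)
  have hL₀ : (C ⊔ M)ᗮᴮ = C ⊔ M := by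
    refine (orthogonalBilin_eq_self_iff hker hdim).2 ⟨sup_le_orthogonalBilin hB hCC
      (inf_le_left.trans (le_orthogonalBilin_of_le hY inf_le_left)) inf_le_right, ?_⟩
    have := finrank_sup_add_finrank_inf_eq C M
    rw [hCM] at this
    omega
  refine ⟨C ⊔ M, hL₀, le_sup_left, fun L hL hCL => ⟨?_, fun hne => ?_⟩⟩
  · rintro hk rfl
    have := finrank_mono (le_inf inf_le_left le_sup_right : M ≤ Y ⊓ (C ⊔ M))
    omega
  · have hYL : Y ⊓ L ≤ M := inf_le_inf_left Y (le_orthogonalBilin_of_le hL hCL)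
    have h₁ := finrank_mono hYL
    have h₂ := finrank_mono (le_inf inf_le_left (hWC.trans hCL) : Y ⊓ Y'' ≤ Y ⊓ L)
    by_contra hk
    have hYLM : Y ⊓ L = M := eq_of_le_of_finrank_le hYL (by omega)
    have hLr := finrank_eq_of_orthogonalBilin_eq_self hker hdim hL
    have hL₀r := finrank_eq_of_orthogonalBilin_eq_self hker hdim hL₀
    exact hne (eq_of_le_of_finrank_le (sup_le hCL (hYLM ▸ inf_le_right)) (by omega)).symm

theorem exists_mem_apply_eq_one (hker : LinearMap.ker B = ⊥) {r : ℕ}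
    (hdim : finrank K V = 2 * r) {C L₁ L₂ : Submodule K V} (hL₁ : L₁ᗮᴮ = L₁) (hL₂ : L₂ᗮᴮ = L₂)
    (hCL₁ : C ≤ L₁) (hCL₂ : C ≤ L₂) (hC : finrank K C + 1 = r) (hne : L₁ ≠ L₂) :
    ∃ w ∈ L₂, ∃ w' ∈ L₁, w ∉ C ∧ B w w' = 1 := by
  have hr₁ := finrank_eq_of_orthogonalBilin_eq_self hker hdim hL₁
  have hr₂ := finrank_eq_of_orthogonalBilin_eq_self hker hdim hL₂
  obtain ⟨w, hw, hwC⟩ := exists_mem_notMem_of_finrank_lt (C := C) (L := L₂) (by omega)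
  obtain ⟨v, hv, hvC⟩ := exists_mem_notMem_of_finrank_lt (C := C) (L := L₁) (by omega)
  have hvL₂ : v ∉ L₂ := fun h => hvC (inf_eq_of_ne hCL₁ hCL₂ (by omega) (by omega) hne ▸ ⟨hv, h⟩)
  have hwv : B w v ≠ 0 := fun h => hvL₂ <|
    (mem_iff_apply_eq_zero hL₂ hCL₂ (by omega) hw hwC
      (le_orthogonalBilin_of_le hL₁ hCL₁ hv)).2 h
  exact ⟨w, hw, (B w v)⁻¹ • v, L₁.smul_mem _ hv, hwC, by simp [hwv]⟩

theorem sub_smul_sub_smul_mem (hB : B.IsSymm) (hker : LinearMap.ker B = ⊥) {r : ℕ}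
    (hdim : finrank K V = 2 * r) {C L₁ L₂ : Submodule K V} (hL₁ : L₁ᗮᴮ = L₁) (hL₂ : L₂ᗮᴮ = L₂)
    (hCL₁ : C ≤ L₁) (hCL₂ : C ≤ L₂) (hC : finrank K C + 1 = r) (hne : L₁ ≠ L₂) {w w' x : V}
    (hw : w ∈ L₂) (hw' : w' ∈ L₁) (hwC : w ∉ C) (h1 : B w w' = 1) (hx : x ∈ Cᗮᴮ) :
    x - B w x • w' - B w' x • w ∈ C := by
  have hr₁ := finrank_eq_of_orthogonalBilin_eq_self hker hdim hL₁
  have hr₂ := finrank_eq_of_orthogonalBilin_eq_self hker hdim hL₂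
  have hw'C : w' ∉ C := fun h => by simpa [h1] using hL₂.ge (hCL₂ h) w hw
  have hy : x - B w x • w' - B w' x • w ∈ Cᗮᴮ :=
    sub_mem (sub_mem hx (smul_mem _ _ (le_orthogonalBilin_of_le hL₁ hCL₁ hw')))
      (smul_mem _ _ (le_orthogonalBilin_of_le hL₂ hCL₂ hw))
  have hw'w : B w' w = 1 := by rw [← hB.eq, h1, map_one]
  rw [← inf_eq_of_ne hCL₁ hCL₂ (by omega) (by omega) hne]
  refine ⟨(mem_iff_apply_eq_zero hL₁ hCL₁ (by omega) hw' hw'C hy).2 ?_,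
    (mem_iff_apply_eq_zero hL₂ hCL₂ (by omega) hw hwC hy).2 ?_⟩
  · simp [hL₁.ge hw' w' hw', hw'w]
  · simp [hL₂.ge hw w hw, h1]

theorem exists_smul_add_mem (hB : B.IsSymm) (hker : LinearMap.ker B = ⊥) {r : ℕ}
    (hdim : finrank K V = 2 * r) {C L₁ L₂ L : Submodule K V} (hL₁ : L₁ᗮᴮ = L₁) (hL₂ : L₂ᗮᴮ = L₂)
    (hCL₁ : C ≤ L₁) (hCL₂ : C ≤ L₂) (hC : finrank K C + 1 = r) (hne : L₁ ≠ L₂) {w w' : V}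
    (hw : w ∈ L₂) (hw' : w' ∈ L₁) (hwC : w ∉ C) (h1 : B w w' = 1) (hL : Lᗮᴮ = L) (hCL : C ≤ L)
    (hLL₂ : L ≠ L₂) : ∃ a : K, a • w + w' ∈ L := by
  have hr₂ := finrank_eq_of_orthogonalBilin_eq_self hker hdim hL₂
  have hrL := finrank_eq_of_orthogonalBilin_eq_self hker hdim hL
  obtain ⟨x, hxL, hxC⟩ := exists_mem_notMem_of_finrank_lt (C := C) (L := L) (by omega)
  have hxperp : x ∈ Cᗮᴮ := le_orthogonalBilin_of_le hL hCL hxL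
  have hwx : B w x ≠ 0 := fun h => hxC <| inf_eq_of_ne hCL hCL₂ (by omega) (by omega) hLL₂ ▸
    ⟨hxL, (mem_iff_apply_eq_zero hL₂ hCL₂ (by omega) hw hwC hxperp).2 h⟩
  set x' := (B w x)⁻¹ • x
  have hc := sub_smul_sub_smul_mem hB hker hdim hL₁ hL₂ hCL₁ hCL₂ hC hne hw hw' hwC h1
    (x := x') ((Cᗮᴮ).smul_mem _ hxperp)
  rw [show B w x' = 1 by simp [x', hwx], one_smul] at hc
  refine ⟨B w' x', ?_⟩
  convert L.sub_mem (L.smul_mem (B w x)⁻¹ hxL : x' ∈ L) (hCL hc) using 1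
  abel

/-- With `w ∈ L₂`, `w' ∈ L₁` a hyperbolic pair, the Lagrangians in question are the
`C + K (a w + w')` with `a + σ a = 0`. -/
theorem card_lagrangian_ne_eq (hB : B.IsSymm) (hker : LinearMap.ker B = ⊥) {r : ℕ}
    (hdim : finrank K V = 2 * r) {C L₁ L₂ : Submodule K V} (hL₁ : L₁ᗮᴮ = L₁) (hL₂ : L₂ᗮᴮ = L₂)
    (hCL₁ : C ≤ L₁) (hCL₂ : C ≤ L₂) (hC : finrank K C + 1 = r) (hne : L₁ ≠ L₂) :
    Nat.card {L // Lᗮᴮ = L ∧ C ≤ L ∧ L ≠ L₂} = Nat.card {a : K // a + σ a = 0} := by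
  have hCC : C ≤ Cᗮᴮ := hCL₂.trans (le_orthogonalBilin_of_le hL₂ hCL₂)
  obtain ⟨w, hw, w', hw', hwC, h1⟩ := exists_mem_apply_eq_one hker hdim hL₁ hL₂ hCL₁ hCL₂ hC hne
  have hww : B w w = 0 := hL₂.ge hw w hw
  have hw'w : B w' w = 1 := by rw [← hB.eq, h1, map_one]
  set e : K → V := fun a => a • w + w'
  have he : ∀ a b, B (e a) (e b) = σ a + b := fun a b => by
    simp [e, hww, hL₁.ge hw' w' hw', h1, hw'w]
  have heL₂ : ∀ a, e a ∉ L₂ := fun a h => by simpa [e, hww, h1] using hL₂.ge h w hw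
  have heC : ∀ a, e a ∉ C := fun a h => heL₂ a (hCL₂ h)
  have hlagf : ∀ a : K, a + σ a = 0 → (C ⊔ K ∙ e a)ᗮᴮ = C ⊔ K ∙ e a := fun a ha =>
    sup_span_singleton_orthogonalBilin_eq hB.isRefl hker hdim hCC hC
      (add_mem (smul_mem _ _ (le_orthogonalBilin_of_le hL₂ hCL₂ hw))
        (le_orthogonalBilin_of_le hL₁ hCL₁ hw')) (by rw [he, add_comm, ha]) (heC a)
  have hmem_e : ∀ a, e a ∈ C ⊔ K ∙ e a := fun a => mem_sup_right (mem_span_singleton_self _)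
  let f : {a : K // a + σ a = 0} → {L // Lᗮᴮ = L ∧ C ≤ L ∧ L ≠ L₂} := fun a =>
    ⟨C ⊔ K ∙ e a, hlagf a a.2, le_sup_left, fun h => heL₂ a (h ▸ hmem_e a)⟩
  refine (Nat.card_eq_of_bijective f ⟨fun ⟨a, ha⟩ ⟨b, hb⟩ hab => ?_,
    fun ⟨L, hL, hCL, hLne⟩ => ?_⟩).symm
  · have hab : C ⊔ K ∙ e a = C ⊔ K ∙ e b := congrArg Subtype.val hab
    have hba : B (e b) (e a) = 0 := (hlagf b hb).ge (hab ▸ hmem_e a) (e b) (hmem_e b)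
    rw [he] at hba
    exact Subtype.ext (by linear_combination hba - hb)
  · obtain ⟨a, hea⟩ := exists_smul_add_mem hB hker hdim hL₁ hL₂ hCL₁ hCL₂ hC hne hw hw' hwC h1
      hL hCL hLne
    have ha : a + σ a = 0 := by rw [add_comm, ← he]; exact hL.ge hea (e a) hea
    exact ⟨⟨a, ha⟩, Subtype.ext (sup_span_singleton_eq (L := L) hCL
      (by rw [finrank_eq_of_orthogonalBilin_eq_self hker hdim hL, hC]) hea (heC a))⟩

theorem card_fiber_inf_eq [Finite K] (hB : B.IsSymm) (hker : LinearMap.ker B = ⊥) {r : ℕ}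
    (hdim : finrank K V = 2 * r) {Y Y'' C : Submodule K V} (hY : Yᗮᴮ = Y) (hY'' : Y''ᗮᴮ = Y'')
    (hWC : Y ⊓ Y'' ≤ C) (hCY'' : C ≤ Y'') (hC : finrank K C + 1 = r) :
    Nat.card {Y' // (Y'ᗮᴮ = Y' ∧ finrank K ↥(Y ⊓ Y') = finrank K ↥(Y ⊓ Y'') ∧
      finrank K ↥(Y' ⊓ Y'') + 1 = r) ∧ Y' ⊓ Y'' = C} = Nat.card {a : K // a + σ a = 0} - 1 := by
  have := Module.finite_of_finite K (M := V)
  have : Finite (Submodule K V) := Finite.of_injective _ SetLike.coe_injective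
  have hr'' := finrank_eq_of_orthogonalBilin_eq_self hker hdim hY''
  obtain ⟨L₀, hL₀, hCL₀, hiff⟩ :=
    exists_lagrangian_finrank_inf_eq_iff_ne hB.isRefl hker hdim hY hY'' hWC hCY'' hC
  have hY''L₀ : Y'' ≠ L₀ := (hiff Y'' hY'' hCY'').1 rfl
  rw [← card_lagrangian_ne_eq hB hker hdim hL₀ hY'' hCL₀ hCY'' hC hY''L₀.symm,
    ← Nat.card_subtype_and_ne ⟨hL₀, hCL₀, hY''L₀.symm⟩]
  refine Nat.card_congr (Equiv.subtypeEquivRight fun L => ⟨?_, ?_⟩)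
  · rintro ⟨⟨hL, hk, -⟩, rfl⟩
    refine ⟨⟨hL, inf_le_left, fun h => ?_⟩, (hiff L hL inf_le_left).1 hk⟩
    subst h
    rw [inf_idem] at hC
    omega
  · rintro ⟨⟨hL, hCL, hne⟩, hne₀⟩
    have hinf := inf_eq_of_ne hCL hCY''
      (by rw [finrank_eq_of_orthogonalBilin_eq_self hker hdim hL, hC]) (by omega) hne
    exact ⟨⟨hL, (hiff L hL hCL).2 hne₀, by rw [hinf, hC]⟩, hinf⟩

theorem card_lagrangian_eq_card_hyperplanes_mul [Finite K] (hB : B.IsSymm)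
    (hker : LinearMap.ker B = ⊥) {r : ℕ} (hdim : finrank K V = 2 * r) {Y Y'' : Submodule K V}
    (hY : Yᗮᴮ = Y) (hY'' : Y''ᗮᴮ = Y'') :
    Nat.card {Y' // Y'ᗮᴮ = Y' ∧ finrank K ↥(Y ⊓ Y') = finrank K ↥(Y ⊓ Y'') ∧
      finrank K ↥(Y' ⊓ Y'') + 1 = r} =
    Nat.card {C // Y ⊓ Y'' ≤ C ∧ C ≤ Y'' ∧ finrank K C + 1 = r} *
      (Nat.card {a : K // a + σ a = 0} - 1) := by
  have := Module.finite_of_finite K (M := V)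
  have : Finite (Submodule K V) := Finite.of_injective _ SetLike.coe_injective
  have hF : ∀ Y' : {Y' // Y'ᗮᴮ = Y' ∧ finrank K ↥(Y ⊓ Y') = finrank K ↥(Y ⊓ Y'') ∧
      finrank K ↥(Y' ⊓ Y'') + 1 = r}, Y ⊓ Y'' ≤ Y'.1 ⊓ Y'' := by
    rintro ⟨Y', hY', hk, hZ⟩
    have hW := inf_eq_inf_of_finrank_inf_eq hker hdim hY hY'.ge hY''.ge hZ hk
    exact le_inf (hW.ge.trans inf_le_right) inf_le_right
  refine Nat.card_eq_mul_of_card_fiber (fun Y' => ⟨Y'.1 ⊓ Y'', hF Y', inf_le_right, Y'.2.2.2⟩) ?_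
  rintro ⟨C, hWC, hCY'', hC⟩
  rw [← card_fiber_inf_eq hB hker hdim hY hY'' hWC hCY'' hC]
  exact Nat.card_congr ((Equiv.subtypeEquivRight fun _ => Subtype.ext_iff).trans
    (Equiv.subtypeSubtypeEquivSubtypeInter _ (· ⊓ Y'' = C)))

theorem card_hyperplanes_mul [Finite K] (hB : B.IsRefl) (hker : LinearMap.ker B = ⊥) {r : ℕ}
    (hdim : finrank K V = 2 * r) {W Y'' : Submodule K V} (hY'' : Y''ᗮᴮ = Y'') (hWY'' : W ≤ Y'') :
    Nat.card {C // W ≤ C ∧ C ≤ Y'' ∧ finrank K C + 1 = r} * (Nat.card K - 1) =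
      Nat.card K ^ (r - finrank K W) - 1 := by
  have hr'' := finrank_eq_of_orthogonalBilin_eq_self hker hdim hY''
  have hdual := finrank_orthogonalBilin_add_finrank hker (B := B)
  have hperpW := hdual W
  let e : {C // W ≤ C ∧ C ≤ Y'' ∧ finrank K C + 1 = r} ≃
      {D // Y'' ≤ D ∧ D ≤ Wᗮᴮ ∧ finrank K D = finrank K Y'' + 1} :=
    { toFun C := ⟨C.1ᗮᴮ, hY''.ge.trans (orthogonalBilin_le C.2.2.1), orthogonalBilin_le C.2.1,
        by have := hdual C.1; omega⟩
      invFun D := ⟨D.1ᗮᴮ,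
        (orthogonalBilin_orthogonalBilin hB hker W).ge.trans (orthogonalBilin_le D.2.2.1),
        (orthogonalBilin_le D.2.1).trans hY''.le, by have := hdual D.1; omega⟩
      left_inv C := Subtype.ext (orthogonalBilin_orthogonalBilin hB hker C.1)
      right_inv D := Subtype.ext (orthogonalBilin_orthogonalBilin hB hker D.1) }
  rw [Nat.card_congr e, card_covers_mul (le_orthogonalBilin_of_le hY'' hWY'')]
  congr 2
  omega

theorem card_lagrangian_mul_card_sub_one [Finite K] (hB : B.IsSymm) (hker : LinearMap.ker B = ⊥)
    {r : ℕ} (hdim : finrank K V = 2 * r) {Y Y'' : Submodule K V} (hY : Yᗮᴮ = Y)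
    (hY'' : Y''ᗮᴮ = Y'') :
    Nat.card {Y' // Y'ᗮᴮ = Y' ∧ finrank K ↥(Y ⊓ Y') = finrank K ↥(Y ⊓ Y'') ∧
      finrank K ↥(Y' ⊓ Y'') + 1 = r} * (Nat.card K - 1) =
    (Nat.card K ^ (r - finrank K ↥(Y ⊓ Y'')) - 1) * (Nat.card {a : K // a + σ a = 0} - 1) := by
  rw [card_lagrangian_eq_card_hyperplanes_mul hB hker hdim hY hY'', mul_right_comm,
    card_hyperplanes_mul hB.isRefl hker hdim hY'' inf_le_right]

end Sesquilinear

section HermitianForm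

variable {K V : Type*} [Field K] [AddCommGroup V] [Module K V] {σ : K →+* K} {h : V → V → K}

/-- The form `h`, linear in its first argument, with its arguments swapped: Mathlib's
sesquilinear forms are semilinear in the first one. -/
def hermitianForm (σ : K →+* K) (h : V → V → K) (hadd : ∀ x y z, h (x + y) z = h x z + h y z)
    (hsmul : ∀ (a : K) x y, h (a • x) y = a * h x y) (hconj : ∀ x y, h x y = σ (h y x)) :
    V →ₛₗ[σ] V →ₗ[K] K :=
  LinearMap.mk₂'ₛₗ σ (RingHom.id K) (fun y x => h x y)
    (fun y z x => by rw [hconj, hadd, map_add, ← hconj, ← hconj])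
    (fun c y x => by rw [hconj, hsmul, map_mul, ← hconj, smul_eq_mul])
    (fun y x z => hadd x z y) (fun c y x => hsmul c x y)

variable {hadd : ∀ x y z, h (x + y) z = h x z + h y z}
  {hsmul : ∀ (a : K) x y, h (a • x) y = a * h x y} {hconj : ∀ x y, h x y = σ (h y x)}

theorem isSymm_hermitianForm : (hermitianForm σ h hadd hsmul hconj).IsSymm :=
  ⟨fun x y => (hconj x y).symm⟩

theorem ker_hermitianForm (hnd : ∀ x, (∀ y, h x y = 0) → x = 0) :
    LinearMap.ker (hermitianForm σ h hadd hsmul hconj) = ⊥ :=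
  LinearMap.ker_eq_bot'.2 fun y hy => hnd y fun x => by
    rw [hconj, show h x y = 0 from LinearMap.congr_fun hy x, map_zero]

end HermitianForm

theorem stmt_13_general (q r i : ℕ) (hq : ∃ p n : ℕ, p.Prime ∧ 0 < n ∧ q = p ^ n)
    (hr : 1 ≤ r) (hir : i ≤ r)
    (K : Type) [Field K] [Fintype K] (hK : Fintype.card K = q ^ 2)
    (V : Type) [AddCommGroup V] [Module K V] [FiniteDimensional K V]
    (hdim : Module.finrank K V = 2 * r)
    (h : V → V → K)
    (hadd : ∀ x y z : V, h (x + y) z = h x z + h y z)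
    (hsmul : ∀ (a : K) (x y : V), h (a • x) y = a * h x y)
    (hherm : ∀ x y : V, h y x = h x y ^ q)
    (hnd : ∀ x : V, (∀ y : V, h x y = 0) → x = 0)
    (Y Y'' : Submodule K V)
    (hY : Module.finrank K ↥Y = r) (hYiso : ∀ x ∈ Y, ∀ y ∈ Y, h x y = 0)
    (hY'' : Module.finrank K ↥Y'' = r) (hY''iso : ∀ x ∈ Y'', ∀ y ∈ Y'', h x y = 0)
    (hint : Module.finrank K ↥(Y ⊓ Y'') = r - i) :
    (Nat.card {Y' : Submodule K V | Module.finrank K ↥Y' = r ∧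
        (∀ x ∈ Y', ∀ y ∈ Y', h x y = 0) ∧
        Module.finrank K ↥(Y ⊓ Y') = r - i ∧
        Module.finrank K ↥(Y' ⊓ Y'') = r - 1} : ℚ) =
      ((q : ℚ) ^ (2 * i) - 1) * ((q : ℚ) - 1) / ((q : ℚ) ^ 2 - 1) := by
  obtain ⟨p, n, hp, hn, hqp⟩ := hq
  obtain ⟨σ, hσ, hσσ⟩ := exists_ringHom_pow_eq_of_card_eq_sq hp hqp hK
  have : RingHomInvPair σ σ := ⟨RingHom.ext hσσ, RingHom.ext hσσ⟩
  set B := hermitianForm σ h hadd hsmul fun x y => by rw [hσ, ← hherm]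
  have hker : LinearMap.ker B = ⊥ := ker_hermitianForm hnd
  have hlag := fun L => orthogonalBilin_eq_self_iff hker hdim (L := L)
  have hcount := card_lagrangian_mul_card_sub_one isSymm_hermitianForm hker hdim
    ((hlag Y).2 ⟨hYiso, hY⟩) ((hlag Y'').2 ⟨hY''iso, hY''⟩)
  rw [card_add_eq_zero_of_card_eq_sq hσ hK, Nat.card_eq_fintype_card (α := K), hK,
    show r - finrank K ↥(Y ⊓ Y'') = i by omega, ← pow_mul] at hcount
  have hset : Nat.card {Y' : Submodule K V | Module.finrank K ↥Y' = r ∧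
      (∀ x ∈ Y', ∀ y ∈ Y', h x y = 0) ∧ Module.finrank K ↥(Y ⊓ Y') = r - i ∧
      Module.finrank K ↥(Y' ⊓ Y'') = r - 1} =
      Nat.card {Y' // Y'.orthogonalBilin B = Y' ∧ finrank K ↥(Y ⊓ Y') = finrank K ↥(Y ⊓ Y'') ∧
        finrank K ↥(Y' ⊓ Y'') + 1 = r} :=
    Nat.card_congr <| Equiv.subtypeEquivRight fun Y' => by
      rw [hlag, hint]
      exact ⟨fun ⟨h₁, h₂, h₃, h₄⟩ => ⟨⟨h₂, h₁⟩, h₃, by omega⟩,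
        fun ⟨⟨h₂, h₁⟩, h₃, h₄⟩ => ⟨h₁, h₂, h₃, by omega⟩⟩
  have hq : 1 < q := hqp ▸ Nat.one_lt_pow hn.ne' hp.one_lt
  have hcountQ := congrArg (Nat.cast (R := ℚ)) hcount
  push_cast [Nat.cast_sub hq.le, Nat.cast_sub (Nat.one_le_pow _ _ (by omega : 0 < q))] at hcountQ
  rw [hset, eq_div_iff (by nlinarith [(by exact_mod_cast hq : (1 : ℚ) < q)])]
  linear_combination hcountQ

/-- The key counting step in the Hecke algebra computation: let `Y`, `Y''` be maximal
isotropic subspaces of a nondegenerate hermitian space `V` of dimension `2r` over `𝔽_{q²}`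
with `dim (Y''/(Y ∩ Y'')) = i` where `1 ≤ i ≤ r` (equivalently `dim (Y ∩ Y'') = r - i`).
Then the number of maximal isotropic subspaces `Y'` of `V` with `dim (Y'/(Y ∩ Y')) = i` and
`dim (Y'/(Y' ∩ Y'')) = 1` equals `(q^{2i}-1)(q-1)/(q²-1)`. -/
theorem stmt_13 (q r i : ℕ) (hq : ∃ p n : ℕ, p.Prime ∧ 0 < n ∧ q = p ^ n)
    (hr : 1 ≤ r) (hi1 : 1 ≤ i) (hir : i ≤ r)
    (K : Type) [Field K] [Fintype K] (hK : Fintype.card K = q ^ 2)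
    (V : Type) [AddCommGroup V] [Module K V] [FiniteDimensional K V]
    (hdim : Module.finrank K V = 2 * r)
    (h : V → V → K)
    (hadd : ∀ x y z : V, h (x + y) z = h x z + h y z)
    (hsmul : ∀ (a : K) (x y : V), h (a • x) y = a * h x y)
    (hherm : ∀ x y : V, h y x = h x y ^ q)
    (hnd : ∀ x : V, (∀ y : V, h x y = 0) → x = 0)
    (Y Y'' : Submodule K V)
    (hY : Module.finrank K ↥Y = r) (hYiso : ∀ x ∈ Y, ∀ y ∈ Y, h x y = 0)
    (hY'' : Module.finrank K ↥Y'' = r) (hY''iso : ∀ x ∈ Y'', ∀ y ∈ Y'', h x y = 0)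
    (hint : Module.finrank K ↥(Y ⊓ Y'') = r - i) :
    (Nat.card {Y' : Submodule K V | Module.finrank K ↥Y' = r ∧
        (∀ x ∈ Y', ∀ y ∈ Y', h x y = 0) ∧
        Module.finrank K ↥(Y ⊓ Y') = r - i ∧
        Module.finrank K ↥(Y' ⊓ Y'') = r - 1} : ℚ) =
      ((q : ℚ) ^ (2 * i) - 1) * ((q : ℚ) - 1) / ((q : ℚ) ^ 2 - 1) :=
  stmt_13_general q r i hq hr hir K hK V hdim h hadd hsmul hherm hnd Y Y'' hY hYiso hY'' hY''iso
    hint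
end
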